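/- Let t be a finite rooted tree and define the path ∅ = u_0 ⪯ u_1 ⪯ ··· ⪯ u_k, where for each i, u_{i+1} is the unique child of u_i with |θ_{u_{i+1}} t| ≥ |t|/2 (and k is the first index at which no such child exists). Then the node u_k minimizes the centrality measure φ_t over all nodes of t, and the competitive ratio satisfies Φ(t) ≤ ∏_{i=1}^k 1/(1 − |θ_{u_i} t|/|t|). -/

import Mathlib

open Finset
open scoped Classical

/-- A plane tree in the Ulam–Harris formalism: a finite set of words
containing the root, closed under parents, with children `u*0, …, u*(k-1)`. -/
def IsPlaneTree (t : Finset (List ℕ)) : Prop :=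
  [] ∈ t ∧ (∀ u ∈ t, u ≠ [] → u.dropLast ∈ t) ∧
  (∀ u j k, u ++ [j] ∈ t → k ≤ j → u ++ [k] ∈ t)

/-- `subSize t v` is the number of nodes of the subtree of `t` rooted at `v`. -/
noncomputable def subSize (t : Finset (List ℕ)) (v : List ℕ) : ℕ :=
  (t.filter (fun w => v <+: w)).card

/-- The centrality measure `φ_t(u)`. -/
noncomputable def phi (t : Finset (List ℕ)) (u : List ℕ) : ℝ :=
  (∏ v ∈ t.filter (fun v => ¬ v <+: u), (subSize t v : ℝ)) *
  (∏ v ∈ t.filter (fun v => v ≠ [] ∧ v <+: u), ((t.card : ℝ) - subSize t v))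

/-- The competitive ratio `Φ(t) = φ_t(∅) / min_{u ∈ t} φ_t(u)`. -/
noncomputable def PhiRatio (t : Finset (List ℕ)) : ℝ :=
  phi t [] / sInf (phi t '' ↑t)

/-!
Passing from a node `v` to a child `w` only changes the factor of `φ` indexed by `w`, from
`|θ_w t|` to `|t| - |θ_w t|`; so `φ` decreases exactly when one steps into a child carrying at
least half of the tree. Along the heavy path `φ` therefore decreases, while every node off the
path is light: its parent is either `u_k`, or an off-path node, or some `u_i` with `i < k`, and
then its subtree is disjoint from the heavy subtree of `u_{i+1}`. Hence `φ` increases when one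
leaves the path, and `u_k` is a minimiser. The bound on `Φ` follows by multiplying the one-step
estimates `φ_t(u_i) ≤ φ_t(u_{i+1}) · (1 - |θ_{u_{i+1}} t| / |t|)⁻¹`.
-/

section PlaneTree

variable {t : Finset (List ℕ)}

theorem induction_on_mem_of_dropLast_mem (hparent : ∀ u ∈ t, u ≠ [] → u.dropLast ∈ t)
    {P : List ℕ → Prop} (nil : P []) (concat : ∀ v j, v ++ [j] ∈ t → P v → P (v ++ [j])) :
    ∀ v ∈ t, P v := by
  intro v
  induction v using List.reverseRecOn with
  | nil => exact fun _ => nil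
  | append_singleton v j ih =>
    intro hv
    exact concat v j hv (ih (by simpa using hparent _ hv (by simp)))

theorem subSize_pos {v : List ℕ} (hv : v ∈ t) : 0 < subSize t v :=
  Finset.card_pos.2 ⟨v, Finset.mem_filter.2 ⟨hv, List.prefix_refl v⟩⟩

theorem subSize_le_card {v : List ℕ} : subSize t v ≤ t.card :=
  Finset.card_filter_le _ _

theorem subSize_le_subSize_of_prefix {p v : List ℕ} (h : p <+: v) :
    subSize t v ≤ subSize t p :=
  Finset.card_le_card <| Finset.monotone_filter_right _ fun _ _ hw => h.trans hw

theorem subSize_lt_card (hroot : [] ∈ t) {v : List ℕ} (hv : v ≠ []) : subSize t v < t.card :=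
  Finset.card_lt_card <| Finset.filter_ssubset.2 ⟨[], hroot, by simpa using hv⟩

/-- Nodes of equal depth have disjoint subtrees, none of which contains the root. -/
theorem subSize_add_subSize_lt_card (hroot : [] ∈ t) {w w' : List ℕ} (hw : w ≠ [])
    (hne : w ≠ w') (hlen : w.length = w'.length) :
    subSize t w + subSize t w' < t.card := by
  have hdisj : Disjoint (t.filter (w <+: ·)) (t.filter (w' <+: ·)) := by
    refine Finset.disjoint_filter.2 fun x _ hx hx' => hne ?_
    rcases List.prefix_or_prefix_of_prefix hx hx' with h | h
    · exact h.eq_of_length hlen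
    · exact (h.eq_of_length hlen.symm).symm
  have hsub : t.filter (w <+: ·) ∪ t.filter (w' <+: ·) ⊂ t := by
    refine Finset.ssubset_iff_of_subset (Finset.union_subset (Finset.filter_subset _ _)
      (Finset.filter_subset _ _)) |>.2 ⟨[], hroot, ?_⟩
    simpa [hroot, ← List.length_eq_zero_iff, ← hlen] using hw
  unfold subSize
  rw [← Finset.card_union_of_disjoint hdisj]
  exact Finset.card_lt_card hsub

theorem phi_pos (hroot : [] ∈ t) (v : List ℕ) : 0 < phi t v := by
  refine mul_pos (Finset.prod_pos fun w hw => ?_) (Finset.prod_pos fun w hw => ?_)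
  · exact_mod_cast subSize_pos (Finset.mem_filter.1 hw).1
  · exact sub_pos.2 <| by exact_mod_cast subSize_lt_card hroot (Finset.mem_filter.1 hw).2.1

theorem phi_concat_mul_subSize {v : List ℕ} {j : ℕ} (hw : v ++ [j] ∈ t) :
    phi t (v ++ [j]) * subSize t (v ++ [j]) = phi t v * (t.card - subSize t (v ++ [j])) := by
  set w := v ++ [j]
  have hwv : ¬ w <+: v := fun h => by simpa [w] using h.length_le
  have hprefix : ∀ x : List ℕ, x <+: w ↔ x = w ∨ x <+: v := fun x => List.prefix_concat_iff
  have hoff : t.filter (¬ · <+: v) = insert w (t.filter (¬ · <+: w)) := by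
    ext x
    by_cases hx : x = w <;> simp [hprefix, hx, hw, hwv]
  have hon : t.filter (fun x => x ≠ [] ∧ x <+: w) =
      insert w (t.filter fun x => x ≠ [] ∧ x <+: v) := by
    ext x
    by_cases hx : x = w <;> simp [hprefix, hx, hw, hwv, w]
  unfold phi
  rw [hoff, hon, Finset.prod_insert (by simp [hwv]), Finset.prod_insert (by simp)]
  ring

theorem phi_le_phi_concat (hroot : [] ∈ t) {v : List ℕ} {j : ℕ} (hw : v ++ [j] ∈ t)
    (hlight : 2 * subSize t (v ++ [j]) ≤ t.card) : phi t v ≤ phi t (v ++ [j]) := by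
  have hs : (0 : ℝ) < subSize t (v ++ [j]) := by exact_mod_cast subSize_pos hw
  have hlight' : 2 * (subSize t (v ++ [j]) : ℝ) ≤ t.card := by exact_mod_cast hlight
  have := phi_concat_mul_subSize hw
  nlinarith [phi_pos hroot v]

theorem phi_concat_le_phi (hroot : [] ∈ t) {v : List ℕ} {j : ℕ} (hw : v ++ [j] ∈ t)
    (hheavy : t.card ≤ 2 * subSize t (v ++ [j])) : phi t (v ++ [j]) ≤ phi t v := by
  have hs : (0 : ℝ) < subSize t (v ++ [j]) := by exact_mod_cast subSize_pos hw
  have hheavy' : (t.card : ℝ) ≤ 2 * subSize t (v ++ [j]) := by exact_mod_cast hheavy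
  have := phi_concat_mul_subSize hw
  nlinarith [phi_pos hroot v]

theorem phi_le_phi_concat_mul (hroot : [] ∈ t) {v : List ℕ} {j : ℕ} (hw : v ++ [j] ∈ t) :
    phi t v ≤ phi t (v ++ [j]) * (1 - (subSize t (v ++ [j]) : ℝ) / t.card)⁻¹ := by
  have hn : (0 : ℝ) < t.card := by exact_mod_cast Finset.card_pos.2 ⟨_, hw⟩
  have hs : (subSize t (v ++ [j]) : ℝ) < t.card :=
    by exact_mod_cast subSize_lt_card hroot (by simp)
  rw [one_sub_div hn.ne', inv_div, ← mul_div_assoc, le_div_iff₀ (by linarith)]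
  have := phi_concat_mul_subSize hw
  nlinarith [phi_pos hroot (v ++ [j])]

end PlaneTree

section HeavyPath

variable {t : Finset (List ℕ)} {k : ℕ} {u : ℕ → List ℕ}

theorem phi_path_last_le_phi_path (hroot : [] ∈ t) (hmem : ∀ i ≤ k, u i ∈ t)
    (hchild : ∀ i < k, (∃ j, u (i + 1) = u i ++ [j]) ∧ t.card ≤ 2 * subSize t (u (i + 1)))
    {i : ℕ} (hi : i ≤ k) : phi t (u k) ≤ phi t (u i) := by
  refine Nat.decreasingInduction (motive := fun i _ => phi t (u k) ≤ phi t (u i))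
    (fun i hi ih => ?_) le_rfl hi
  obtain ⟨⟨j, hj⟩, hheavy⟩ := hchild i hi
  rw [hj] at ih hheavy
  exact ih.trans (phi_concat_le_phi hroot (hj ▸ hmem (i + 1) hi) hheavy)

theorem two_mul_subSize_lt_card_of_ne_path (hroot : [] ∈ t)
    (hparent : ∀ v ∈ t, v ≠ [] → v.dropLast ∈ t) (h0 : u 0 = [])
    (hchild : ∀ i < k, (∃ j, u (i + 1) = u i ++ [j]) ∧ t.card ≤ 2 * subSize t (u (i + 1)))
    (hstop : ∀ j, u k ++ [j] ∈ t → 2 * subSize t (u k ++ [j]) < t.card) :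
    ∀ v ∈ t, (∀ i ≤ k, v ≠ u i) → 2 * subSize t v < t.card := by
  refine induction_on_mem_of_dropLast_mem hparent
    (fun hnil => absurd h0.symm (hnil 0 k.zero_le)) fun v j hw ih hoff => ?_
  by_cases hv : ∃ i ≤ k, v = u i
  · obtain ⟨i, hik, rfl⟩ := hv
    rcases hik.lt_or_eq with hik | rfl
    · obtain ⟨⟨j', hj'⟩, hheavy⟩ := hchild i hik
      have hsiblings := subSize_add_subSize_lt_card hroot (w := u i ++ [j]) (by simp)
        (hoff (i + 1) hik) (by simp [hj'])
      omega
    · exact hstop j hw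
  · push Not at hv
    have hmono := subSize_le_subSize_of_prefix (t := t) (⟨[j], rfl⟩ : v <+: v ++ [j])
    have hv_light := ih hv
    omega

theorem phi_path_last_le_phi (hroot : [] ∈ t) (hparent : ∀ v ∈ t, v ≠ [] → v.dropLast ∈ t)
    (h0 : u 0 = []) (hmem : ∀ i ≤ k, u i ∈ t)
    (hchild : ∀ i < k, (∃ j, u (i + 1) = u i ++ [j]) ∧ t.card ≤ 2 * subSize t (u (i + 1)))
    (hstop : ∀ j, u k ++ [j] ∈ t → 2 * subSize t (u k ++ [j]) < t.card) :
    ∀ v ∈ t, phi t (u k) ≤ phi t v := by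
  have hlight := two_mul_subSize_lt_card_of_ne_path hroot hparent h0 hchild hstop
  refine induction_on_mem_of_dropLast_mem hparent
    (h0 ▸ phi_path_last_le_phi_path hroot hmem hchild k.zero_le) fun v j hw ih => ?_
  by_cases hpath : ∃ i ≤ k, v ++ [j] = u i
  · obtain ⟨i, hik, hi⟩ := hpath
    exact hi ▸ phi_path_last_le_phi_path hroot hmem hchild hik
  · push Not at hpath
    exact ih.trans (phi_le_phi_concat hroot hw (hlight _ hw hpath).le)

theorem phi_nil_le_phi_path_mul_prod (hroot : [] ∈ t) (h0 : u 0 = []) (hmem : ∀ i ≤ k, u i ∈ t)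
    (hchild : ∀ i < k, ∃ j, u (i + 1) = u i ++ [j]) {m : ℕ} (hm : m ≤ k) :
    phi t [] ≤ phi t (u m) * ∏ i ∈ Finset.Icc 1 m, (1 - (subSize t (u i) : ℝ) / t.card)⁻¹ := by
  induction m with
  | zero => simp [h0]
  | succ m ih =>
    obtain ⟨j, hj⟩ := hchild m hm
    have hstep := phi_le_phi_concat_mul hroot (hj ▸ hmem (m + 1) hm)
    rw [← hj] at hstep
    rw [Finset.prod_Icc_succ_top (by omega), mul_comm _ (_⁻¹), ← mul_assoc]
    refine (ih (by omega)).trans (mul_le_mul_of_nonneg_right hstep ?_)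
    exact Finset.prod_nonneg fun i _ => inv_nonneg.2 <| sub_nonneg.2 <|
      div_le_one_of_le₀ (by exact_mod_cast subSize_le_card) (Nat.cast_nonneg _)

end HeavyPath

theorem stmt3 (t : Finset (List ℕ)) (ht : IsPlaneTree t) (k : ℕ) (u : ℕ → List ℕ)
    (h0 : u 0 = [])
    (hmem : ∀ i ≤ k, u i ∈ t)
    (hchild : ∀ i < k, (∃ j, u (i + 1) = u i ++ [j]) ∧ t.card ≤ 2 * subSize t (u (i + 1)))
    (hstop : ∀ j, u k ++ [j] ∈ t → 2 * subSize t (u k ++ [j]) < t.card) :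
    (∀ v ∈ t, phi t (u k) ≤ phi t v) ∧
      PhiRatio t ≤ ∏ i ∈ Finset.Icc 1 k, (1 - (subSize t (u i) : ℝ) / t.card)⁻¹ := by
  obtain ⟨hroot, hparent, -⟩ := ht
  have hmin := phi_path_last_le_phi hroot hparent h0 hmem hchild hstop
  have hinf : sInf (phi t '' ↑t) = phi t (u k) :=
    IsLeast.csInf_eq ⟨⟨u k, hmem k le_rfl, rfl⟩, by rintro _ ⟨v, hv, rfl⟩; exact hmin v hv⟩
  refine ⟨hmin, ?_⟩
  rw [PhiRatio, hinf, div_le_iff₀' (phi_pos hroot _)]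
  exact phi_nil_le_phi_path_mul_prod hroot h0 hmem (fun i hi => (hchild i hi).1) le_rfl
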